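/- arXiv:2107.03676 — 4 statements merged into one kernel-verified Lean document; each statement's English description precedes it below -/
import Mathlib

section
/- Let T be a real symmetric n×n matrix with T_{nn} = 1, T_{in} = 0 for 2 ≤ i ≤ n-1, T_{1n} ∈ {0,1/2}, and all eigenvalues of the upper-left block T̂ at least 3. If U ∈ GL(n,ℤ) satisfies ∑_{i,j=1}^n T_{ij} U_{nj} U_{ni} = 1, then U_{ni} = 0 for all 1 ≤ i ≤ n-1 and U_{nn} = ±1; consequently U has block upper-triangular form with an (n-1)×(n-1) unimodular block Û in the upper-left, arbitrary integer entries U_{in} (1 ≤ i ≤ n-1) in the last column, last row (0,...,0,±1). -/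
open Finset

/-!
Write the last row of `U` as `(x, a)` with `x ∈ ℤ^(n-1)`. Since `T` is symmetric with last column
`(c, 0, …, 0, 1)`, the hypothesis reads `xᵀ T̂ x + 2 c x₁ a + a² = 1`. Completing the square and
`|c| ≤ 1/2` give `2 c x₁ a + a² ≥ -x₁²/4 ≥ -|x|²/4`, so `(11/4)|x|² ≤ 1`, forcing the integer
vector `x` to vanish and then `a² = 1`. Expanding `det U` along the last row gives `det U = a det Û`.
-/

theorem Matrix.IsSymm.sum_sum_mul_mul_fin_succ {R : Type*} [CommRing R] {m : ℕ}
    {T : Matrix (Fin (m+1)) (Fin (m+1)) R} (hT : T.IsSymm) (v : Fin (m+1) → R) :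
    ∑ i, ∑ j, T i j * v j * v i =
      ∑ i : Fin m, ∑ j : Fin m, T i.castSucc j.castSucc * v i.castSucc * v j.castSucc
        + 2 * ∑ i : Fin m, T (Fin.last m) i.castSucc * v i.castSucc * v (Fin.last m)
        + T (Fin.last m) (Fin.last m) * v (Fin.last m) ^ 2 := by
  simp only [Fin.sum_univ_castSucc, sum_add_distrib, hT.apply (Fin.last m), two_mul]
  have (i : Fin m) : T (Fin.last m) i.castSucc * v (Fin.last m) * v i.castSucc =
      T (Fin.last m) i.castSucc * v i.castSucc * v (Fin.last m) := mul_right_comm ..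
  simp only [this]
  ring_nf

theorem Matrix.det_eq_mul_det_submatrix_castSucc {R : Type*} [CommRing R] {m : ℕ}
    (U : Matrix (Fin (m+1)) (Fin (m+1)) R) (hU : ∀ i : Fin m, U (Fin.last m) i.castSucc = 0) :
    U.det = U (Fin.last m) (Fin.last m) * (U.submatrix Fin.castSucc Fin.castSucc).det := by
  rw [Matrix.det_succ_row U (Fin.last m), Fin.sum_univ_castSucc]
  simp [hU, Fin.succAbove_last]

theorem Int.eq_zero_of_sum_sq_lt_one {ι : Type*} [Fintype ι] {x : ι → ℤ}
    (hx : ∑ i, (x i : ℝ) ^ 2 < 1) (i : ι) : x i = 0 := by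
  have hx : ∑ i, x i ^ 2 < 1 := by exact_mod_cast hx
  have := (single_le_sum (fun j _ => sq_nonneg (x j)) (mem_univ i)).trans_lt hx
  nlinarith

theorem sum_sq_lt_one_of_add_two_mul_add_sq_eq_one {ι : Type*} [Fintype ι]
    {x : ι → ℝ} {i₀ : ι} {q a c : ℝ} (hc : |c| ≤ 1 / 2) (hq : 3 * ∑ i, x i ^ 2 ≤ q)
    (h : q + 2 * (c * x i₀ * a) + a ^ 2 = 1) :
    ∑ i, x i ^ 2 < 1 := by
  have hx₀ : x i₀ ^ 2 ≤ ∑ i, x i ^ 2 := single_le_sum (fun i _ => sq_nonneg (x i)) (mem_univ i₀)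
  have hc₂ : c ^ 2 ≤ 1 / 4 := by nlinarith [abs_le.mp hc]
  nlinarith [sq_nonneg (a + c * x i₀), mul_le_mul hc₂ hx₀ (sq_nonneg _) (by norm_num)]

/-- With T as in Statement 0, if U ∈ GL(n,ℤ) satisfies
∑_{i,j} T_{ij} U_{nj} U_{ni} = 1, then the last row of U is (0,...,0,±1);
consequently the upper-left (n-1)×(n-1) block Û of U is unimodular. -/
theorem stmt1 (m : ℕ) (hm : 1 ≤ m) (T : Matrix (Fin (m+1)) (Fin (m+1)) ℝ)
    (hsymm : T.IsSymm)
    (hTnn : T (Fin.last m) (Fin.last m) = 1)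
    (hTin : ∀ i : Fin m, 1 ≤ (i : ℕ) → T (Fin.castSucc i) (Fin.last m) = 0)
    (hT1n : T (Fin.castSucc ⟨0, hm⟩) (Fin.last m) = 0 ∨
            T (Fin.castSucc ⟨0, hm⟩) (Fin.last m) = 1/2)
    (heig : ∀ x : Fin m → ℝ,
      3 * ∑ i, x i ^ 2 ≤
        ∑ i, ∑ j, T (Fin.castSucc i) (Fin.castSucc j) * x i * x j)
    (U : Matrix (Fin (m+1)) (Fin (m+1)) ℤ) (hU : IsUnit U.det)
    (hone : ∑ i, ∑ j, T i j * (U (Fin.last m) j : ℝ) * (U (Fin.last m) i : ℝ) = 1) :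
    (∀ i : Fin m, U (Fin.last m) (Fin.castSucc i) = 0) ∧
    (U (Fin.last m) (Fin.last m) = 1 ∨ U (Fin.last m) (Fin.last m) = -1) ∧
    IsUnit (U.submatrix (Fin.castSucc : Fin m → Fin (m+1)) Fin.castSucc).det := by
  have hcross : ∑ i : Fin m, T (Fin.last m) i.castSucc * (U (Fin.last m) i.castSucc : ℝ) *
      U (Fin.last m) (Fin.last m) = T (Fin.castSucc ⟨0, hm⟩) (Fin.last m) *
      U (Fin.last m) (Fin.castSucc ⟨0, hm⟩) * U (Fin.last m) (Fin.last m) := by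
    refine (sum_eq_single _ (fun i _ hi => ?_) (by simp)).trans (by rw [hsymm.apply])
    rw [hsymm.apply, hTin i (Nat.one_le_iff_ne_zero.mpr (hi <| Fin.ext ·))]
    ring
  rw [hsymm.sum_sum_mul_mul_fin_succ, hcross, hTnn, one_mul] at hone
  have hc : |T (Fin.castSucc ⟨0, hm⟩) (Fin.last m)| ≤ 1 / 2 := by
    rcases hT1n with h | h <;> rw [h] <;> norm_num
  have hx : ∀ i : Fin m, U (Fin.last m) i.castSucc = 0 :=
    Int.eq_zero_of_sum_sq_lt_one <|
      sum_sq_lt_one_of_add_two_mul_add_sq_eq_one hc (heig _) hone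
  have ha : U (Fin.last m) (Fin.last m) ^ 2 = 1 := by
    simp only [hx, Int.cast_zero, mul_zero, zero_mul, sum_const_zero, zero_add] at hone
    exact_mod_cast hone
  refine ⟨hx, sq_eq_one_iff.mp ha, ?_⟩
  rw [U.det_eq_mul_det_submatrix_castSucc hx] at hU
  exact isUnit_of_mul_isUnit_right hU
end

section
/- Define for τ ∈ ℍ₁, w₁,w₂ ∈ ℂ: Δ_b(τ, w₁, w₂) = Θ_b(3τ, (3/2)w₁)·Θ_0(τ, w₂ + (1/2)w₁) + Θ_{b+1/2}(3τ, (3/2)w₁)·Θ_{1/2}(τ, w₂ + (1/2)w₁), where Θ_a(τ,w) = ∑_{m∈ℤ} e^{2πi(m+a)²τ+4πi(m+a)w}. Then for b = 0 the function (w₁, w₂) ↦ Δ_0(τ, w₁, w₂) is symmetric: Δ_0(τ, w₁, w₂) = Δ_0(τ, w₂, w₁). -/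
open Complex

/-- One-variable Jacobi theta with characteristic a. -/
noncomputable def Theta1 (a : ℝ) (τ w : ℂ) : ℂ :=
  ∑' m : ℤ, Complex.exp (2 * Real.pi * Complex.I * ((m : ℂ) + a)^2 * τ
    + 4 * Real.pi * Complex.I * ((m : ℂ) + a) * w)

/-- Δ_b(τ,w₁,w₂) = Θ_b(3τ,(3/2)w₁)Θ_0(τ,w₂+(1/2)w₁)
  + Θ_{b+1/2}(3τ,(3/2)w₁)Θ_{1/2}(τ,w₂+(1/2)w₁). -/
noncomputable def Delta (b : ℝ) (τ w1 w2 : ℂ) : ℂ :=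
  Theta1 b (3*τ) ((3/2)*w1) * Theta1 0 τ (w2 + (1/2)*w1) +
  Theta1 (b + 1/2) (3*τ) ((3/2)*w1) * Theta1 (1/2) τ (w2 + (1/2)*w1)

/-- The individual term of the theta series. -/
noncomputable def thetaTerm (a : ℝ) (τ w : ℂ) (m : ℤ) : ℂ :=
  Complex.exp (2 * Real.pi * Complex.I * ((m : ℂ) + a)^2 * τ
    + 4 * Real.pi * Complex.I * ((m : ℂ) + a) * w)

lemma Theta1_eq_tsum (a : ℝ) (τ w : ℂ) : Theta1 a τ w = ∑' m : ℤ, thetaTerm a τ w m := rfl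

lemma thetaTerm_eq (a : ℝ) (τ w : ℂ) (m : ℤ) :
    thetaTerm a τ w m
      = Complex.exp (2 * Real.pi * Complex.I * (a:ℂ)^2 * τ + 4 * Real.pi * Complex.I * a * w)
        * jacobiTheta₂_term m (2*w + 2*a*τ) (2*τ) := by
  rw [thetaTerm, jacobiTheta₂_term, ← Complex.exp_add]
  congr 1
  ring

lemma summable_thetaTerm {τ : ℂ} (hτ : 0 < τ.im) (a : ℝ) (w : ℂ) :
    Summable (thetaTerm a τ w) := by
  rw [funext (thetaTerm_eq a τ w)]
  apply Summable.mul_left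
  rw [summable_jacobiTheta₂_term_iff]
  simpa using hτ

lemma theta_mul {a b : ℝ} {τ₁ τ₂ w₁ w₂ : ℂ} (h1 : Summable (thetaTerm a τ₁ w₁))
    (h2 : Summable (thetaTerm b τ₂ w₂)) :
    Theta1 a τ₁ w₁ * Theta1 b τ₂ w₂
      = ∑' p : ℤ × ℤ, thetaTerm a τ₁ w₁ p.1 * thetaTerm b τ₂ w₂ p.2 :=
  tsum_mul_tsum_of_summable_norm (summable_norm_iff.mpr h1) (summable_norm_iff.mpr h2)

lemma tsum_sumtype {α β : Type*} (f : α ⊕ β → ℂ) (h1 : Summable (fun a => f (.inl a)))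
    (h2 : Summable (fun b => f (.inr b))) :
    ∑' i, f i = ∑' a, f (.inl a) + ∑' b, f (.inr b) := by
  have H1 : HasSum (f ∘ ((↑) : Set.range (Sum.inl : α → α ⊕ β) → α ⊕ β)) (∑' a, f (.inl a)) :=
    (Function.Injective.hasSum_range_iff Sum.inl_injective).mpr h1.hasSum
  have H2 : HasSum (f ∘ ((↑) : Set.range (Sum.inr : β → α ⊕ β) → α ⊕ β)) (∑' b, f (.inr b)) :=
    (Function.Injective.hasSum_range_iff Sum.inr_injective).mpr h2.hasSum
  exact (H1.add_isCompl Set.isCompl_range_inl_range_inr H2).tsum_eq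

/-- The combined double-series term of Δ₀, indexed by a sum type. -/
noncomputable def Hterm (τ w1 w2 : ℂ) : (ℤ × ℤ) ⊕ (ℤ × ℤ) → ℂ
  | .inl p => thetaTerm 0 (3*τ) ((3/2)*w1) p.1 * thetaTerm 0 τ (w2 + (1/2)*w1) p.2
  | .inr p => thetaTerm (1/2) (3*τ) ((3/2)*w1) p.1 * thetaTerm (1/2) τ (w2 + (1/2)*w1) p.2

/-- The symmetry permutation on the index set. -/
def phi : (ℤ × ℤ) ⊕ (ℤ × ℤ) → (ℤ × ℤ) ⊕ (ℤ × ℤ)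
  | .inl (m, n) => if (m + n) % 2 = 0 then .inl ((n-m)/2, (3*m+n)/2)
      else .inr ((n-m-1)/2, (3*m+n-1)/2)
  | .inr (m, n) => if (m + n) % 2 = 0 then .inl ((n-m)/2, (3*m+n+2)/2)
      else .inr ((n-m-1)/2, (3*m+n+1)/2)

lemma phi_invol : Function.Involutive phi := by
  rintro (⟨m, n⟩ | ⟨m, n⟩) <;> simp only [phi] <;> split_ifs with h <;>
    simp only [phi] <;> split_ifs with h2
  all_goals first
    | (simp only [Sum.inl.injEq, Sum.inr.injEq, Prod.mk.injEq]; omega)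
    | omega

lemma Hterm_phi (τ w1 w2 : ℂ) (i : (ℤ × ℤ) ⊕ (ℤ × ℤ)) :
    Hterm τ w2 w1 (phi i) = Hterm τ w1 w2 i := by
  obtain (⟨m, n⟩ | ⟨m, n⟩) := i <;> simp only [phi] <;> split_ifs with h
  · obtain ⟨k, hk⟩ : ∃ k, n = m + 2*k := ⟨(n-m)/2, by omega⟩
    subst hk
    rw [show (m + 2*k - m)/2 = k by omega, show (3*m + (m + 2*k))/2 = 2*m + k by omega]
    simp only [Hterm, thetaTerm]
    rw [← Complex.exp_add, ← Complex.exp_add]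
    push_cast
    congr 1
    ring
  · obtain ⟨k, hk⟩ : ∃ k, n = m + 2*k + 1 := ⟨(n-m-1)/2, by omega⟩
    subst hk
    rw [show (m + 2*k + 1 - m - 1)/2 = k by omega,
      show (3*m + (m + 2*k + 1) - 1)/2 = 2*m + k by omega]
    simp only [Hterm, thetaTerm]
    rw [← Complex.exp_add, ← Complex.exp_add]
    push_cast
    congr 1
    ring
  · obtain ⟨k, hk⟩ : ∃ k, n = m + 2*k := ⟨(n-m)/2, by omega⟩
    subst hk
    rw [show (m + 2*k - m)/2 = k by omega, show (3*m + (m + 2*k) + 2)/2 = 2*m + k + 1 by omega]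
    simp only [Hterm, thetaTerm]
    rw [← Complex.exp_add, ← Complex.exp_add]
    push_cast
    congr 1
    ring
  · obtain ⟨k, hk⟩ : ∃ k, n = m + 2*k + 1 := ⟨(n-m-1)/2, by omega⟩
    subst hk
    rw [show (m + 2*k + 1 - m - 1)/2 = k by omega,
      show (3*m + (m + 2*k + 1) + 1)/2 = 2*m + k + 1 by omega]
    simp only [Hterm, thetaTerm]
    rw [← Complex.exp_add, ← Complex.exp_add]
    push_cast
    congr 1
    ring

set_option maxHeartbeats 1000000 in
lemma Delta_eq_tsum (τ w1 w2 : ℂ) (hτ : 0 < τ.im) :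
    Delta 0 τ w1 w2 = ∑' i, Hterm τ w1 w2 i := by
  have h3τ : 0 < (3*τ).im := by
    have : (3*τ).im = 3 * τ.im := by simp [Complex.mul_im]
    rw [this]; linarith
  have s1 := summable_thetaTerm h3τ 0 ((3/2)*w1)
  have s2 := summable_thetaTerm hτ 0 (w2 + (1/2)*w1)
  have s3 := summable_thetaTerm h3τ (1/2) ((3/2)*w1)
  have s4 := summable_thetaTerm hτ (1/2) (w2 + (1/2)*w1)
  have key : Delta 0 τ w1 w2
      = (∑' p : ℤ × ℤ, Hterm τ w1 w2 (.inl p)) + ∑' p : ℤ × ℤ, Hterm τ w1 w2 (.inr p) := by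
    rw [Delta, show (0:ℝ) + 1/2 = 1/2 by norm_num, theta_mul s1 s2, theta_mul s3 s4]
    rfl
  rw [key, tsum_sumtype]
  · exact summable_mul_of_summable_norm (summable_norm_iff.mpr s1) (summable_norm_iff.mpr s2)
  · exact summable_mul_of_summable_norm (summable_norm_iff.mpr s3) (summable_norm_iff.mpr s4)

/-- Δ_0 is symmetric in (w₁,w₂). -/
theorem stmt13 (τ w1 w2 : ℂ) (hτ : 0 < τ.im) :
    Delta 0 τ w1 w2 = Delta 0 τ w2 w1 := by
  rw [Delta_eq_tsum τ w1 w2 hτ, Delta_eq_tsum τ w2 w1 hτ]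
  calc ∑' i, Hterm τ w1 w2 i
      = ∑' i, Hterm τ w2 w1 (phi_invol.toPerm phi i) := by
        exact tsum_congr fun i => (Hterm_phi τ w1 w2 i).symm
    _ = ∑' i, Hterm τ w2 w1 i := (phi_invol.toPerm phi).tsum_eq _
end

section
/- Define Δ_{1/3}(τ, w₁, w₂) and Δ_{2/3}(τ, w₁, w₂) as Δ_b(τ,w₁,w₂) = Θ_b(3τ,(3/2)w₁)·Θ_0(τ, w₂+(1/2)w₁) + Θ_{b+1/2}(3τ,(3/2)w₁)·Θ_{1/2}(τ, w₂+(1/2)w₁). Then the sum Δ_{1/3}(τ,w₁,w₂) + Δ_{2/3}(τ,w₁,w₂) is symmetric in (w₁, w₂). -/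
/-!
The substitution `x = 3(m + b) + (n + c)`, `y = 2(n + c)` turns the double series of
`Θ_b(3τ, 3w₁/2) Θ_c(τ, w₂ + w₁/2)` into the series of
`exp(2πi τ (x² - xy + y²)/3 + 2πi (x w₁ + y w₂))` over a coset of a sublattice of `ℤ²`.
When `3b = k ∈ ℤ`, the two products in `Δ_b` cover the points with `x + y ≡ k (mod 3)` and `y` even,
resp. odd. The summand and this set are both invariant under `(x, y, w₁, w₂) ↦ (y, x, w₂, w₁)`,
so each such `Δ_b` is already symmetric in `(w₁, w₂)`.
-/

open Complex

lemma summable_norm_thetaTerm (a : ℝ) {τ : ℂ} (hτ : 0 < τ.im) (w : ℂ) :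
    Summable fun m => ‖thetaTerm a τ w m‖ := by
  have hterm : thetaTerm a τ w = fun m => Complex.exp (2 * Real.pi * Complex.I * (a : ℂ)^2 * τ
      + 4 * Real.pi * Complex.I * a * w) * jacobiTheta₂_term m (2 * a * τ + 2 * w) (2 * τ) := by
    funext m
    rw [thetaTerm, jacobiTheta₂_term, ← Complex.exp_add]
    congr 1
    ring
  rw [summable_norm_iff, hterm]
  refine ((summable_jacobiTheta₂_term_iff _ _).mpr ?_).mul_left _
  simpa using hτ

lemma hasSum_thetaTerm_mul_thetaTerm {τ τ' : ℂ} (hτ : 0 < τ.im) (hτ' : 0 < τ'.im)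
    (a a' : ℝ) (w w' : ℂ) :
    HasSum (fun p : ℤ × ℤ => thetaTerm a τ w p.1 * thetaTerm a' τ' w' p.2)
      (Theta1 a τ w * Theta1 a' τ' w') := by
  have h := summable_norm_thetaTerm a hτ w
  have h' := summable_norm_thetaTerm a' hτ' w'
  exact h.of_norm.hasSum.mul h'.of_norm.hasSum (summable_mul_of_summable_norm h h')

noncomputable def latticeTerm (τ w1 w2 : ℂ) (x : ℤ × ℤ) : ℂ :=
  Complex.exp (2 * Real.pi * Complex.I * τ * ((x.1 : ℂ)^2 - x.1 * x.2 + (x.2 : ℂ)^2) / 3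
    + 2 * Real.pi * Complex.I * (x.1 * w1 + x.2 * w2))

lemma latticeTerm_swap (τ w1 w2 : ℂ) (x : ℤ × ℤ) :
    latticeTerm τ w2 w1 x.swap = latticeTerm τ w1 w2 x := by
  simp only [latticeTerm, Prod.fst_swap, Prod.snd_swap]
  congr 1
  ring

lemma thetaTerm_mul_thetaTerm {b c : ℝ} {s t : ℤ} (hs : (s : ℝ) = 3 * b + c) (ht : (t : ℝ) = 2 * c)
    (τ w1 w2 : ℂ) (m n : ℤ) :
    thetaTerm b (3 * τ) ((3/2) * w1) m * thetaTerm c τ (w2 + (1/2) * w1) n =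
      latticeTerm τ w1 w2 (3 * m + n + s, 2 * n + t) := by
  have hs' : (s : ℂ) = 3 * b + c := by exact_mod_cast hs
  have ht' : (t : ℂ) = 2 * c := by exact_mod_cast ht
  rw [thetaTerm, thetaTerm, latticeTerm, ← Complex.exp_add]
  push_cast
  rw [hs', ht']
  congr 1
  ring

lemma range_toLatticeCoords (s t : ℤ) :
    Set.range (fun p : ℤ × ℤ => (3 * p.1 + p.2 + s, 2 * p.2 + t)) =
      {x | x.1 + x.2 ≡ s + t [ZMOD 3] ∧ x.2 ≡ t [ZMOD 2]} := by
  ext ⟨x, y⟩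
  simp only [Set.mem_range, Set.mem_ofPred_eq, Int.ModEq, Prod.mk.injEq, Prod.exists]
  constructor
  · rintro ⟨m, n, rfl, rfl⟩
    omega
  · rintro ⟨hsum, hy⟩
    exact ⟨(x - (y - t) / 2 - s) / 3, (y - t) / 2, by omega, by omega⟩

lemma hasSum_Theta1_mul_Theta1 {b c : ℝ} {s t : ℤ} (hs : (s : ℝ) = 3 * b + c)
    (ht : (t : ℝ) = 2 * c) {τ : ℂ} (hτ : 0 < τ.im) (w1 w2 : ℂ) :
    HasSum ({x | x.1 + x.2 ≡ s + t [ZMOD 3] ∧ x.2 ≡ t [ZMOD 2]}.indicator (latticeTerm τ w1 w2))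
      (Theta1 b (3 * τ) ((3/2) * w1) * Theta1 c τ (w2 + (1/2) * w1)) := by
  set e : ℤ × ℤ → ℤ × ℤ := fun p => (3 * p.1 + p.2 + s, 2 * p.2 + t)
  have he : Function.Injective e := by
    intro p q hpq
    simp only [e, Prod.mk.injEq] at hpq
    ext <;> omega
  rw [← range_toLatticeCoords, ← he.hasSum_iff fun x hx => Set.indicator_of_notMem hx _]
  convert hasSum_thetaTerm_mul_thetaTerm (τ := 3 * τ) (by simpa using hτ) hτ b c ((3/2) * w1)
    (w2 + (1/2) * w1) using 1
  funext p
  rw [Function.comp_apply, Set.indicator_of_mem (Set.mem_range_self p),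
    thetaTerm_mul_thetaTerm hs ht]

lemma hasSum_Delta {b : ℝ} {k : ℤ} (hk : (k : ℝ) = 3 * b) {τ : ℂ} (hτ : 0 < τ.im) (w1 w2 : ℂ) :
    HasSum ({x | x.1 + x.2 ≡ k [ZMOD 3]}.indicator (latticeTerm τ w1 w2)) (Delta b τ w1 w2) := by
  have heven := hasSum_Theta1_mul_Theta1 (s := k) (t := 0) (c := 0) (by simpa using hk)
    (by simp) hτ w1 w2
  have hodd := hasSum_Theta1_mul_Theta1 (s := k + 2) (t := 1) (b := b + 1/2) (c := 1/2)
    (by push_cast; linarith) (by norm_num) hτ w1 w2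
  rw [Delta]
  convert heven.add hodd using 1
  funext x
  simp only [Set.indicator_apply, Set.mem_ofPred_eq, Int.ModEq]
  split_ifs <;> first | omega | simp

lemma Delta_comm {b : ℝ} {k : ℤ} (hk : (k : ℝ) = 3 * b) {τ : ℂ} (hτ : 0 < τ.im) (w1 w2 : ℂ) :
    Delta b τ w1 w2 = Delta b τ w2 w1 := by
  refine (hasSum_Delta hk hτ w1 w2).unique ?_
  rw [← (Equiv.prodComm ℤ ℤ).hasSum_iff]
  convert hasSum_Delta hk hτ w2 w1 using 1
  funext x
  simp only [Function.comp_apply, Equiv.prodComm_apply, Set.indicator_apply, Set.mem_ofPred_eq,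
    Prod.fst_swap, Prod.snd_swap, add_comm x.2 x.1, latticeTerm_swap]

/-- Δ_{1/3} + Δ_{2/3} is symmetric in (w₁,w₂). -/
theorem stmt14 (τ w1 w2 : ℂ) (hτ : 0 < τ.im) :
    Delta (1/3) τ w1 w2 + Delta (2/3) τ w1 w2 =
      Delta (1/3) τ w2 w1 + Delta (2/3) τ w2 w1 := by
  rw [Delta_comm (b := 1/3) (k := 1) (by norm_num) hτ,
    Delta_comm (b := 2/3) (k := 2) (by norm_num) hτ]
end

section
/- Let z₁,...,z_N be distinct complex numbers on the unit circle and c₁,...,c_N nonzero complex numbers. Then for every δ > 0 there exist infinitely many positive integers q with |∑_{j=1}^N c_j z_j^q| > e^{−πqδ}. Equivalently, if |∑_j c_j z_j^q| ≤ e^{−πqδ} for all sufficiently large q, then all c_j = 0. -/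
open Finset Filter Polynomial Topology

/-!
If the exponential sums `s q = ∑ j, c j * z j ^ q` tend to `0`, so does every single term
`c k * z k ^ q`: applying the polynomial `p` to the shift `q ↦ q + 1` turns `s` into
`q ↦ ∑ j, c j * z j ^ q * p (z j)`, and the Lagrange basis polynomial at `z k` isolates the
`k`-th term. On the unit circle `‖c k * z k ^ q‖ = ‖c k‖`, so `c k = 0`. Hence the sums cannot
be eventually bounded by the decaying sequence `exp (-π q δ)`.
-/

section PowerSums

variable {ι : Type*} [Fintype ι]

theorem sum_coeff_mul_sum_pow_add {R : Type*} [CommSemiring R] (p : R[X]) (c z : ι → R)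
    (q : ℕ) :
    ∑ i ∈ range (p.natDegree + 1), p.coeff i * ∑ j, c j * z j ^ (q + i) =
      ∑ j, c j * z j ^ q * p.eval (z j) := by
  simp_rw [eval_eq_sum_range, Finset.mul_sum, pow_add]
  rw [Finset.sum_comm]
  refine Finset.sum_congr rfl fun j _ => Finset.sum_congr rfl fun i _ => ?_
  ring

theorem exists_sum_mul_sum_pow_add_eq {K : Type*} [Field K] [DecidableEq ι] {z : ι → K}
    (hz : Function.Injective z) (c : ι → K) (k : ι) :
    ∃ (n : ℕ) (a : ℕ → K), ∀ q,
      ∑ i ∈ range n, a i * ∑ j, c j * z j ^ (q + i) = c k * z k ^ q := by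
  let p := Lagrange.basis univ z k
  refine ⟨p.natDegree + 1, p.coeff, fun q => ?_⟩
  rw [sum_coeff_mul_sum_pow_add, Finset.sum_eq_single k]
  · rw [Lagrange.eval_basis_self hz.injOn (mem_univ k), mul_one]
  · intro j _ hjk
    rw [Lagrange.eval_basis_of_ne hjk.symm (mem_univ j), mul_zero]
  · exact fun hk => (hk (mem_univ k)).elim

theorem tendsto_mul_pow_of_tendsto_sum_mul_pow {K : Type*} [NormedField K] {z : ι → K}
    (hz : Function.Injective z) {c : ι → K}
    (hs : Tendsto (fun q => ∑ j, c j * z j ^ q) atTop (𝓝 0)) (k : ι) :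
    Tendsto (fun q => c k * z k ^ q) atTop (𝓝 0) := by
  classical
  obtain ⟨n, a, ha⟩ := exists_sum_mul_sum_pow_add_eq hz c k
  simp_rw [← ha]
  simpa using tendsto_finsetSum (range n) fun i _ =>
    (hs.comp (tendsto_add_atTop_nat i)).const_mul (a i)

theorem eq_zero_of_tendsto_sum_mul_pow {K : Type*} [NormedField K] {z : ι → K}
    (hz : Function.Injective z) (hnorm : ∀ j, ‖z j‖ = 1) {c : ι → K}
    (hs : Tendsto (fun q => ∑ j, c j * z j ^ q) atTop (𝓝 0)) (k : ι) : c k = 0 := by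
  have hterm := (tendsto_mul_pow_of_tendsto_sum_mul_pow hz hs k).norm
  simp only [norm_mul, norm_pow, hnorm, one_pow, mul_one, norm_zero] at hterm
  exact norm_eq_zero.1 (tendsto_nhds_unique tendsto_const_nhds hterm)

end PowerSums

theorem tendsto_exp_neg_mul_natCast {a : ℝ} (ha : 0 < a) :
    Tendsto (fun q : ℕ => Real.exp (-(a * q))) atTop (𝓝 0) :=
  Real.tendsto_exp_atBot.comp <| tendsto_neg_atTop_atBot.comp <|
    tendsto_natCast_atTop_atTop.const_mul_atTop ha

/-- If z₁,...,z_N are distinct points on the unit circle and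
c₁,...,c_N are nonzero complex numbers, then for every δ > 0 there are
infinitely many positive integers q with |∑_j c_j z_j^q| > e^{−πqδ}. -/
theorem stmt19 (N : ℕ) (hN : 0 < N) (z : Fin N → ℂ)
    (hinj : Function.Injective z) (hcirc : ∀ j, ‖z j‖ = 1)
    (c : Fin N → ℂ) (hc : ∀ j, c j ≠ 0) (δ : ℝ) (hδ : 0 < δ) :
    {q : ℕ | 0 < q ∧
      Real.exp (-(Real.pi) * q * δ) < ‖∑ j, c j * z j ^ q‖}.Infinite := by
  intro hfin
  obtain ⟨Q, hQ⟩ := hfin.bddAbove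
  have hbound : ∀ᶠ q : ℕ in atTop, ‖∑ j, c j * z j ^ q‖ ≤ Real.exp (-(Real.pi * δ * q)) := by
    filter_upwards [eventually_gt_atTop Q] with q hq
    rw [show -(Real.pi * δ * q) = -Real.pi * q * δ by ring]
    exact not_lt.1 fun hlt => hq.not_ge (hQ ⟨by omega, hlt⟩)
  have hs : Tendsto (fun q => ∑ j, c j * z j ^ q) atTop (𝓝 0) :=
    squeeze_zero_norm' hbound (tendsto_exp_neg_mul_natCast (mul_pos Real.pi_pos hδ))
  exact hc ⟨0, hN⟩ (eq_zero_of_tendsto_sum_mul_pow hinj hcirc hs _)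
end
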